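/- arXiv:1801.07148 — 2 statements merged into one kernel-verified Lean document; each statement's English description precedes it below -/
import Mathlib

section
/- Let ν be a nonnegative finite symmetric Borel measure on ℝ^N, and let φ : ℝ → ℝ be nondecreasing, globally Lipschitz with Lipschitz constant L_φ satisfying L_φ · ν(ℝ^N) ≤ 1, and φ(0) = 0. If ψ ∈ L^∞(ℝ^N), then ‖T^exp[ψ]‖_{L^∞(ℝ^N)} ≤ ‖ψ‖_{L^∞(ℝ^N)}. If in addition ψ ∈ L^1(ℝ^N), then ‖T^exp[ψ]‖_{L^1(ℝ^N)} ≤ ‖ψ‖_{L^1(ℝ^N)}. -/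
open MeasureTheory ENNReal
open scoped ENNReal NNReal

noncomputable section

/-- The zero-order Lévy operator `L^ν[ψ](x) := ∫ (ψ(x+z) − ψ(x)) dν(z)`. -/
def Lnu {N : ℕ} (ν : Measure (EuclideanSpace ℝ (Fin N)))
    (ψ : EuclideanSpace ℝ (Fin N) → ℝ) (x : EuclideanSpace ℝ (Fin N)) : ℝ :=
  ∫ z, (ψ (x + z) - ψ x) ∂ν

/-- The explicit-step operator `T^exp[ψ](x) := ψ(x) + L^ν[φ∘ψ](x)`. -/
def Texp {N : ℕ} (ν : Measure (EuclideanSpace ℝ (Fin N))) (φ : ℝ → ℝ)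
    (ψ : EuclideanSpace ℝ (Fin N) → ℝ) (x : EuclideanSpace ℝ (Fin N)) : ℝ :=
  ψ x + Lnu ν (fun y => φ (ψ y)) x


/-! With `c = ν(ℝᴺ)`, `T ψ = (ψ - c φ(ψ)) + ∫ φ(ψ(· + z)) dν(z)`. The CFL condition `L c ≤ 1`
makes `r ↦ r - c φ(r)` nondecreasing, so, `φ` being nondecreasing as well, `T` is monotone
pointwise and `T ψ` is squeezed between `T(-M) = -M` and `T M = M` for `M = ‖ψ‖_∞`. In `L¹`, the
first term has absolute value `|ψ| - c |φ(ψ)|`, and by Tonelli and translation invariance of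
Lebesgue measure the integral term contributes at most `c ∫ |φ(ψ)|`, exactly what the first term
lost. -/

section Translation

variable {G : Type*} [MeasurableSpace G] [AddGroup G] [MeasurableAdd₂ G]
  {μ : Measure G} (ν : Measure G)

theorem ae_ae_add_of_ae [SFinite μ] [μ.IsAddRightInvariant] [SFinite ν] {p : G → Prop}
    (h : ∀ᵐ y ∂μ, p y) : ∀ᵐ x ∂μ, ∀ᵐ z ∂ν, p (x + z) :=
  Measure.ae_ae_of_ae_prod <|
    (Measure.quasiMeasurePreserving_fst.comp
      (measurePreserving_add_prod μ ν).quasiMeasurePreserving).ae h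

theorem lintegral_lintegral_add [SFinite μ] [μ.IsAddRightInvariant] [SFinite ν]
    {f : G → ℝ≥0∞} (hf : Measurable f) :
    ∫⁻ x, ∫⁻ z, f (x + z) ∂ν ∂μ = ν Set.univ * ∫⁻ x, f x ∂μ := by
  rw [lintegral_lintegral_swap (f := fun x z => f (x + z)) (hf.comp measurable_add).aemeasurable]
  simp_rw [lintegral_add_right_eq_self f, lintegral_const, mul_comm]

theorem integrable_comp_add_of_abs_le [IsFiniteMeasure ν] {f : G → ℝ} (hf : Measurable f)
    {C : ℝ} (hfC : ∀ y, |f y| ≤ C) (x : G) : Integrable (fun z => f (x + z)) ν :=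
  .of_bound (hf.comp (measurable_const_add x)).aestronglyMeasurable C
    (ae_of_all _ fun z => hfC (x + z))

end Translation

theorem MeasureTheory.MemLp.exists_measurable_ae_eq_abs_le {α : Type*} [MeasurableSpace α]
    {μ : Measure α} {f : α → ℝ} (hf : MemLp f ∞ μ) :
    ∃ g : α → ℝ, Measurable g ∧ g =ᵐ[μ] f ∧ ∀ x, |g x| ≤ (eLpNorm f ∞ μ).toReal := by
  set M := (eLpNorm f ∞ μ).toReal
  have hM : 0 ≤ M := ENNReal.toReal_nonneg
  have hfM : ∀ᵐ x ∂μ, |f x| ≤ M := by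
    filter_upwards [ae_le_eLpNormEssSup (f := f) (μ := μ)] with x hx
    rw [← Real.norm_eq_abs, ← toReal_enorm (f x)]
    exact ENNReal.toReal_mono hf.2.ne (by rwa [eLpNorm_exponent_top])
  refine ⟨fun x => max (-M) (min M (hf.1.mk f x)),
    measurable_const.max (measurable_const.min hf.1.measurable_mk), ?_, fun x => ?_⟩
  · filter_upwards [hf.1.ae_eq_mk, hfM] with x hx hxM
    rw [← hx, min_eq_right (abs_le.1 hxM).2, max_eq_right (abs_le.1 hxM).1]
  · exact abs_le.2 ⟨le_max_left _ _, max_le (by linarith) (min_le_left _ _)⟩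

section Profile

variable {φ : ℝ → ℝ} {L : ℝ≥0} {c : ℝ}

theorem monotone_sub_mul_of_lipschitzWith (hLip : LipschitzWith L φ) (hc : 0 ≤ c)
    (hcL : c * L ≤ 1) : Monotone fun r => r - c * φ r := by
  intro r s hrs
  have hφ : φ s - φ r ≤ L * (s - r) := by
    have := hLip.dist_le_mul s r
    rw [Real.dist_eq, Real.dist_eq, abs_of_nonneg (sub_nonneg.2 hrs)] at this
    exact (le_abs_self _).trans this
  nlinarith [mul_le_mul_of_nonneg_left hφ hc, mul_le_mul_of_nonneg_right hcL (sub_nonneg.2 hrs)]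

theorem abs_sub_mul_eq (hmono : Monotone φ) (hLip : LipschitzWith L φ) (hφ0 : φ 0 = 0)
    (hc : 0 ≤ c) (hcL : c * L ≤ 1) (r : ℝ) : |r - c * φ r| = |r| - c * |φ r| := by
  have hprofile := monotone_sub_mul_of_lipschitzWith hLip hc hcL
  rcases le_total 0 r with hr | hr
  · have h : 0 ≤ r - c * φ r := by simpa [hφ0] using hprofile hr
    rw [abs_of_nonneg h, abs_of_nonneg hr, abs_of_nonneg (hφ0 ▸ hmono hr)]
  · have h : r - c * φ r ≤ 0 := by simpa [hφ0] using hprofile hr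
    rw [abs_of_nonpos h, abs_of_nonpos hr, abs_of_nonpos (hφ0 ▸ hmono hr)]
    ring

end Profile

section ExplicitStep

variable {N : ℕ} (ν : Measure (EuclideanSpace ℝ (Fin N))) (φ : ℝ → ℝ)

theorem texp_congr_ae [SFinite ν] {f g : EuclideanSpace ℝ (Fin N) → ℝ} (hfg : f =ᵐ[volume] g) :
    Texp ν φ f =ᵐ[volume] Texp ν φ g := by
  filter_upwards [hfg, ae_ae_add_of_ae ν hfg] with x hx hxz
  simp only [Texp, Lnu, hx]
  congr 1
  exact integral_congr_ae (by filter_upwards [hxz] with z hz; rw [hz])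

theorem texp_eq_add_integral [IsFiniteMeasure ν] {g : EuclideanSpace ℝ (Fin N) → ℝ}
    {x : EuclideanSpace ℝ (Fin N)} (hint : Integrable (fun z => φ (g (x + z))) ν) :
    Texp ν φ g x = (g x - ν.real Set.univ * φ (g x)) + ∫ z, φ (g (x + z)) ∂ν := by
  rw [Texp, Lnu, integral_sub hint (integrable_const _), integral_const, smul_eq_mul]
  ring

variable {ν φ} {L : ℝ≥0}

theorem measureReal_univ_mul_le_one (hCFL : (L : ℝ≥0∞) * ν Set.univ ≤ 1) :
    ν.real Set.univ * L ≤ 1 := by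
  simpa [mul_comm, measureReal_def] using ENNReal.toReal_mono ENNReal.one_ne_top hCFL

variable [IsFiniteMeasure ν]

theorem abs_texp_le (hmono : Monotone φ) (hLip : LipschitzWith L φ)
    (hCFL : (L : ℝ≥0∞) * ν Set.univ ≤ 1) {g : EuclideanSpace ℝ (Fin N) → ℝ} {M : ℝ}
    (hgM : ∀ y, |g y| ≤ M) (hint : ∀ x, Integrable (fun z => φ (g (x + z))) ν)
    (x : EuclideanSpace ℝ (Fin N)) : |Texp ν φ g x| ≤ M := by
  have hprofile := monotone_sub_mul_of_lipschitzWith hLip measureReal_nonneg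
    (measureReal_univ_mul_le_one hCFL)
  have hlow : ν.real Set.univ * φ (-M) ≤ ∫ z, φ (g (x + z)) ∂ν := by
    simpa using integral_mono (integrable_const _) (hint x)
      fun z => hmono (abs_le.1 (hgM (x + z))).1
  have hup : ∫ z, φ (g (x + z)) ∂ν ≤ ν.real Set.univ * φ M := by
    simpa using integral_mono (hint x) (integrable_const _)
      fun z => hmono (abs_le.1 (hgM (x + z))).2
  have hlow' : -M - ν.real Set.univ * φ (-M) ≤ g x - ν.real Set.univ * φ (g x) :=
    hprofile (abs_le.1 (hgM x)).1
  have hup' : g x - ν.real Set.univ * φ (g x) ≤ M - ν.real Set.univ * φ M :=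
    hprofile (abs_le.1 (hgM x)).2
  rw [texp_eq_add_integral ν φ (hint x), abs_le]
  constructor <;> linarith

theorem lintegral_enorm_texp_le (hmono : Monotone φ) (hLip : LipschitzWith L φ)
    (hCFL : (L : ℝ≥0∞) * ν Set.univ ≤ 1) (hφ0 : φ 0 = 0) {g : EuclideanSpace ℝ (Fin N) → ℝ}
    (hg : Measurable g) (hint : ∀ x, Integrable (fun z => φ (g (x + z))) ν) :
    ∫⁻ x, ‖Texp ν φ g x‖ₑ ≤ ∫⁻ x, ‖g x‖ₑ := by
  set c := ν.real Set.univ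
  have habs := abs_sub_mul_eq hmono hLip hφ0 measureReal_nonneg (measureReal_univ_mul_le_one hCFL)
  have hφg : Measurable fun x => φ (g x) := hLip.continuous.measurable.comp hg
  have hpt : ∀ x, ‖Texp ν φ g x‖ₑ ≤
      ENNReal.ofReal (|g x| - c * |φ (g x)|) + ∫⁻ z, ‖φ (g (x + z))‖ₑ ∂ν := by
    intro x
    rw [texp_eq_add_integral ν φ (hint x)]
    refine (enorm_add_le _ _).trans (add_le_add ?_ (enorm_integral_le_lintegral_enorm _))
    rw [Real.enorm_eq_ofReal_abs, habs]
  have hsplit : ∀ x, ENNReal.ofReal (|g x| - c * |φ (g x)|) + ENNReal.ofReal (c * |φ (g x)|)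
      = ‖g x‖ₑ := by
    intro x
    rw [← ENNReal.ofReal_add (by linarith [habs (g x), abs_nonneg (g x - c * φ (g x))])
      (by positivity), sub_add_cancel, Real.enorm_eq_ofReal_abs]
  have htransl : ∫⁻ x, ∫⁻ z, ‖φ (g (x + z))‖ₑ ∂ν = ∫⁻ x, ENNReal.ofReal (c * |φ (g x)|) := by
    rw [lintegral_lintegral_add ν (f := fun y => ‖φ (g y)‖ₑ) hφg.enorm]
    have hofReal : ∀ x, ENNReal.ofReal (c * |φ (g x)|) = ν Set.univ * ‖φ (g x)‖ₑ := fun x => by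
      rw [ENNReal.ofReal_mul measureReal_nonneg, ofReal_measureReal, Real.enorm_eq_ofReal_abs]
    rw [lintegral_congr hofReal, lintegral_const_mul' _ _ (measure_ne_top ν _)]
  calc ∫⁻ x, ‖Texp ν φ g x‖ₑ
      ≤ ∫⁻ x, (ENNReal.ofReal (|g x| - c * |φ (g x)|) + ∫⁻ z, ‖φ (g (x + z))‖ₑ ∂ν) :=
        lintegral_mono hpt
    _ = ∫⁻ x, (ENNReal.ofReal (|g x| - c * |φ (g x)|) + ENNReal.ofReal (c * |φ (g x)|)) := by
        have hm : Measurable fun x => ENNReal.ofReal (|g x| - c * |φ (g x)|) :=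
          (hg.abs.sub (hφg.abs.const_mul c)).ennreal_ofReal
        rw [lintegral_add_left hm, lintegral_add_left hm, htransl]
    _ = ∫⁻ x, ‖g x‖ₑ := lintegral_congr hsplit

end ExplicitStep

theorem stmt4_general {N : ℕ}
    (ν : Measure (EuclideanSpace ℝ (Fin N))) [IsFiniteMeasure ν]
    (φ : ℝ → ℝ) (hmono : Monotone φ)
    (L : ℝ≥0) (hLip : LipschitzWith L φ)
    (hCFL : (L : ℝ≥0∞) * ν Set.univ ≤ 1)
    (hφ0 : φ 0 = 0)
    (ψ : EuclideanSpace ℝ (Fin N) → ℝ) (hψ : MemLp ψ ∞ volume) :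
    eLpNorm (Texp ν φ ψ) ∞ volume ≤ eLpNorm ψ ∞ volume ∧
    (Integrable ψ volume →
      eLpNorm (Texp ν φ ψ) 1 volume ≤ eLpNorm ψ 1 volume) := by
  obtain ⟨g, hg, hgψ, hgM⟩ := hψ.exists_measurable_ae_eq_abs_le
  have hφg : ∀ y, |φ (g y)| ≤ L * (eLpNorm ψ ∞ volume).toReal := fun y =>
    (hLip.norm_le_mul hφ0 (g y)).trans (by gcongr; exact hgM y)
  have hint := integrable_comp_add_of_abs_le ν (hLip.continuous.measurable.comp hg) hφg
  have hTg : Texp ν φ ψ =ᵐ[volume] Texp ν φ g := texp_congr_ae ν φ hgψ.symm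
  refine ⟨?_, fun _ => ?_⟩
  · rw [eLpNorm_congr_ae hTg, eLpNorm_exponent_top]
    exact (eLpNormEssSup_le_of_ae_bound
      (ae_of_all _ (abs_texp_le hmono hLip hCFL hgM hint))).trans_eq (ENNReal.ofReal_toReal hψ.2.ne)
  · rw [eLpNorm_congr_ae hTg, ← eLpNorm_congr_ae hgψ, eLpNorm_one_eq_lintegral_enorm,
      eLpNorm_one_eq_lintegral_enorm]
    exact lintegral_enorm_texp_le hmono hLip hCFL hφ0 hg hint

theorem stmt4 {N : ℕ} (hN : 1 ≤ N)
    (ν : Measure (EuclideanSpace ℝ (Fin N))) [IsFiniteMeasure ν]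
    (hsym : ν.map (fun z => -z) = ν)
    (φ : ℝ → ℝ) (hmono : Monotone φ)
    (L : ℝ≥0) (hLip : LipschitzWith L φ)
    (hCFL : (L : ℝ≥0∞) * ν Set.univ ≤ 1)
    (hφ0 : φ 0 = 0)
    (ψ : EuclideanSpace ℝ (Fin N) → ℝ) (hψ : MemLp ψ ∞ volume) :
    eLpNorm (Texp ν φ ψ) ∞ volume ≤ eLpNorm ψ ∞ volume ∧
    (Integrable ψ volume →
      eLpNorm (Texp ν φ ψ) 1 volume ≤ eLpNorm ψ 1 volume) :=
  stmt4_general ν φ hmono L hLip hCFL hφ0 ψ hψ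
end
end

section
/- Let ν be a nonnegative finite symmetric Borel measure on ℝ^N, and let φ : ℝ → ℝ be nondecreasing, globally Lipschitz, with φ(0) = 0. Let w, ŵ, ρ, ρ̂ ∈ L^1(ℝ^N) and suppose w is an a.e.-subsolution of (EP) with right-hand side ρ (i.e. w(x) − L^ν[φ∘w](x) ≤ ρ(x) for a.e. x) and ŵ is an a.e.-supersolution of (EP) with right-hand side ρ̂ (i.e. ŵ(x) − L^ν[φ∘ŵ](x) ≥ ρ̂(x) for a.e. x). Then ∫_{ℝ^N} (w(x) − ŵ(x))^+ dx ≤ ∫_{ℝ^N} (ρ(x) − ρ̂(x))^+ dx, where a^+ := max(a, 0). -/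
/-!
Put `u = w - ŵ`, `g = φ ∘ w - φ ∘ ŵ` and `A = {u > 0}`. Subtracting the two inequalities gives
`u ≤ (ρ - ρ̂) + L^ν[g]` a.e., and integrating over `A` yields the claim once `∫_A L^ν[g] ≤ 0`.
Since `φ` is nondecreasing, `g ≥ 0` on `A` and `g ≤ 0` off `A`, so `∫_A g = ∫ g⁺`, whereas by
translation invariance of Lebesgue measure
`∫_A ∫ g(x + z) dν(z) dx ≤ ∫ ∫ g⁺(x + z) dν(z) dx = ν(ℝᴺ) ∫ g⁺`.
-/

open MeasureTheory ENNReal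
open scoped ENNReal NNReal

noncomputable section

open Set

section Integrals

variable {α : Type*} [MeasurableSpace α] {μ : Measure α}

theorem integral_max_zero_eq_setIntegral {g : α → ℝ} {A : Set α} (hA : NullMeasurableSet A μ)
    (hpos : ∀ x ∈ A, 0 ≤ g x) (hneg : ∀ x ∉ A, g x ≤ 0) :
    ∫ x, max (g x) 0 ∂μ = ∫ x in A, g x ∂μ := by
  rw [← integral_indicator₀ hA]
  congr 1 with x
  by_cases hx : x ∈ A
  · simp [hx, hpos x hx]
  · simp [hx, hneg x hx]

theorem setIntegral_le_integral_max_zero {f : α → ℝ} (hf : Integrable f μ) (A : Set α) :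
    ∫ x in A, f x ∂μ ≤ ∫ x, max (f x) 0 ∂μ :=
  (setIntegral_mono hf.integrableOn hf.pos_part.integrableOn fun _ => le_max_left _ _).trans
    (setIntegral_le_integral hf.pos_part (ae_of_all _ fun _ => le_max_right _ _))

theorem LipschitzWith.integrable_comp {K : ℝ≥0} {φ : ℝ → ℝ} (hφ : LipschitzWith K φ)
    (hφ0 : φ 0 = 0) {f : α → ℝ} (hf : Integrable f μ) : Integrable (fun x => φ (f x)) μ :=
  memLp_one_iff_integrable.1 (hφ.comp_memLp hφ0 (memLp_one_iff_integrable.2 hf))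

end Integrals

section Translation

variable {G : Type*} [MeasurableSpace G] [AddGroup G] [MeasurableAdd₂ G]
  {μ ν : Measure G} [SFinite μ] [μ.IsAddRightInvariant] [IsFiniteMeasure ν]
  {E : Type*} [NormedAddCommGroup E]

theorem MeasureTheory.Integrable.comp_add_prod {f : G → E} (hf : Integrable f μ) :
    Integrable (fun p : G × G => f (p.1 + p.2)) (μ.prod ν) :=
  (measurePreserving_add_prod μ ν).integrable_comp_of_integrable (hf.comp_fst ν)

theorem MeasureTheory.Integrable.ae_integrable_comp_add {f : G → E} (hf : Integrable f μ) :
    ∀ᵐ x ∂μ, Integrable (fun z => f (x + z)) ν :=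
  (hf.comp_add_prod (ν := ν)).prod_right_ae

theorem integral_integral_comp_add [NormedSpace ℝ E] [CompleteSpace E] {f : G → E}
    (hf : Integrable f μ) :
    ∫ x, ∫ z, f (x + z) ∂ν ∂μ = ν.real univ • ∫ x, f x ∂μ := by
  rw [integral_integral_swap (hf.comp_add_prod (ν := ν))]
  simp only [integral_add_right_eq_self, integral_const]

theorem setIntegral_integral_comp_add_sub_nonpos {g : G → ℝ} (hg : Integrable g μ) {A : Set G}
    (hA : NullMeasurableSet A μ) (hpos : ∀ x ∈ A, 0 ≤ g x) (hneg : ∀ x ∉ A, g x ≤ 0) :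
    ∫ x in A, (∫ z, g (x + z) ∂ν - ν.real univ * g x) ∂μ ≤ 0 := by
  have hF : Integrable (fun x => ∫ z, g (x + z) ∂ν) μ := hg.comp_add_prod.integral_prod_left
  have hF_le : ∀ᵐ x ∂μ, max (∫ z, g (x + z) ∂ν) 0 ≤ ∫ z, max (g (x + z)) 0 ∂ν := by
    filter_upwards [hg.ae_integrable_comp_add (ν := ν)] with x hx
    exact max_le (integral_mono hx hx.pos_part fun _ => le_max_left _ _)
      (integral_nonneg fun _ => le_max_right _ _)
  have key : ∫ x in A, ∫ z, g (x + z) ∂ν ∂μ ≤ ν.real univ * ∫ x in A, g x ∂μ :=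
    calc ∫ x in A, ∫ z, g (x + z) ∂ν ∂μ
        ≤ ∫ x, max (∫ z, g (x + z) ∂ν) 0 ∂μ := setIntegral_le_integral_max_zero hF A
      _ ≤ ∫ x, ∫ z, max (g (x + z)) 0 ∂ν ∂μ :=
        integral_mono_ae hF.pos_part hg.pos_part.comp_add_prod.integral_prod_left hF_le
      _ = ν.real univ * ∫ x, max (g x) 0 ∂μ := integral_integral_comp_add hg.pos_part
      _ = ν.real univ * ∫ x in A, g x ∂μ := by rw [integral_max_zero_eq_setIntegral hA hpos hneg]
  rw [integral_sub hF.integrableOn (hg.integrableOn.const_mul _), integral_const_mul]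
  linarith

end Translation

section Levy

variable {N : ℕ} {ν : Measure (EuclideanSpace ℝ (Fin N))} [IsFiniteMeasure ν]

theorem Lnu_eq_integral_sub {ψ : EuclideanSpace ℝ (Fin N) → ℝ} {x : EuclideanSpace ℝ (Fin N)}
    (hψ : Integrable (fun z => ψ (x + z)) ν) :
    Lnu ν ψ x = ∫ z, ψ (x + z) ∂ν - ν.real univ * ψ x := by
  rw [Lnu, integral_sub hψ (integrable_const _), integral_const, smul_eq_mul]

theorem Lnu_sub {ψ₁ ψ₂ : EuclideanSpace ℝ (Fin N) → ℝ} {x : EuclideanSpace ℝ (Fin N)}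
    (h₁ : Integrable (fun z => ψ₁ (x + z)) ν) (h₂ : Integrable (fun z => ψ₂ (x + z)) ν) :
    Lnu ν ψ₁ x - Lnu ν ψ₂ x = Lnu ν (fun y => ψ₁ y - ψ₂ y) x := by
  rw [Lnu_eq_integral_sub h₁, Lnu_eq_integral_sub h₂, Lnu_eq_integral_sub (h₁.sub h₂),
    integral_sub h₁ h₂]
  ring

theorem Lnu_ae_eq {g : EuclideanSpace ℝ (Fin N) → ℝ} (hg : Integrable g volume) :
    Lnu ν g =ᵐ[volume] fun x => ∫ z, g (x + z) ∂ν - ν.real univ * g x := by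
  filter_upwards [hg.ae_integrable_comp_add (ν := ν)] with x hx using Lnu_eq_integral_sub hx

theorem MeasureTheory.Integrable.Lnu {g : EuclideanSpace ℝ (Fin N) → ℝ}
    (hg : Integrable g volume) : Integrable (Lnu ν g) volume :=
  (hg.comp_add_prod.integral_prod_left.sub (hg.const_mul _)).congr (Lnu_ae_eq hg).symm

theorem setIntegral_Lnu_nonpos {g : EuclideanSpace ℝ (Fin N) → ℝ} (hg : Integrable g volume)
    {A : Set (EuclideanSpace ℝ (Fin N))} (hA : NullMeasurableSet A volume)
    (hpos : ∀ x ∈ A, 0 ≤ g x) (hneg : ∀ x ∉ A, g x ≤ 0) :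
    ∫ x in A, Lnu ν g x ≤ 0 :=
  (integral_congr_ae (ae_restrict_of_ae (Lnu_ae_eq hg))).trans_le
    (setIntegral_integral_comp_add_sub_nonpos hg hA hpos hneg)

end Levy

theorem stmt5_general {N : ℕ}
    (ν : Measure (EuclideanSpace ℝ (Fin N))) [IsFiniteMeasure ν]
    (φ : ℝ → ℝ) (hmono : Monotone φ)
    (L : ℝ≥0) (hLip : LipschitzWith L φ) (hφ0 : φ 0 = 0)
    (w wh ρ ρ' : EuclideanSpace ℝ (Fin N) → ℝ)
    (hw : Integrable w volume) (hwh : Integrable wh volume)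
    (hρ : Integrable ρ volume) (hρ' : Integrable ρ' volume)
    (hsub : ∀ᵐ x ∂(volume : Measure (EuclideanSpace ℝ (Fin N))),
      w x - Lnu ν (fun y => φ (w y)) x ≤ ρ x)
    (hsup : ∀ᵐ x ∂(volume : Measure (EuclideanSpace ℝ (Fin N))),
      ρ' x ≤ wh x - Lnu ν (fun y => φ (wh y)) x) :
    ∫ x, max (w x - wh x) 0 ≤ ∫ x, max (ρ x - ρ' x) 0 := by
  have hφw := hLip.integrable_comp hφ0 hw
  have hφwh := hLip.integrable_comp hφ0 hwh
  set g := fun x => φ (w x) - φ (wh x)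
  have hg : Integrable g volume := hφw.sub hφwh
  have hf : Integrable (fun x => ρ x - ρ' x) volume := hρ.sub hρ'
  set A := {x | wh x < w x}
  have hA : NullMeasurableSet A volume := nullMeasurableSet_lt hwh.aemeasurable hw.aemeasurable
  have hdiff : ∀ᵐ x, w x - wh x ≤ (ρ x - ρ' x) + Lnu ν g x := by
    filter_upwards [hsub, hsup, hφw.ae_integrable_comp_add (ν := ν),
      hφwh.ae_integrable_comp_add (ν := ν)] with x h₁ h₂ i₁ i₂
    linarith [Lnu_sub (ψ₁ := fun y => φ (w y)) (ψ₂ := fun y => φ (wh y)) i₁ i₂]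
  calc ∫ x, max (w x - wh x) 0
      = ∫ x in A, (w x - wh x) := integral_max_zero_eq_setIntegral hA
        (fun x hx => sub_nonneg.2 (le_of_lt hx)) fun x hx => sub_nonpos.2 (not_lt.1 hx)
    _ ≤ ∫ x in A, ((ρ x - ρ' x) + Lnu ν g x) :=
        setIntegral_mono_ae (hw.sub hwh).integrableOn (hf.add hg.Lnu).integrableOn hdiff
    _ = (∫ x in A, (ρ x - ρ' x)) + ∫ x in A, Lnu ν g x :=
        integral_add hf.integrableOn hg.Lnu.integrableOn
    _ ≤ (∫ x, max (ρ x - ρ' x) 0) + 0 :=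
        add_le_add (setIntegral_le_integral_max_zero hf A)
          (setIntegral_Lnu_nonpos hg hA (fun x hx => sub_nonneg.2 (hmono (le_of_lt hx)))
            fun x hx => sub_nonpos.2 (hmono (not_lt.1 hx)))
    _ = ∫ x, max (ρ x - ρ' x) 0 := add_zero _

theorem stmt5 {N : ℕ} (hN : 1 ≤ N)
    (ν : Measure (EuclideanSpace ℝ (Fin N))) [IsFiniteMeasure ν]
    (hsym : ν.map (fun z => -z) = ν)
    (φ : ℝ → ℝ) (hmono : Monotone φ)
    (L : ℝ≥0) (hLip : LipschitzWith L φ) (hφ0 : φ 0 = 0)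
    (w wh ρ ρ' : EuclideanSpace ℝ (Fin N) → ℝ)
    (hw : Integrable w volume) (hwh : Integrable wh volume)
    (hρ : Integrable ρ volume) (hρ' : Integrable ρ' volume)
    (hsub : ∀ᵐ x ∂(volume : Measure (EuclideanSpace ℝ (Fin N))),
      w x - Lnu ν (fun y => φ (w y)) x ≤ ρ x)
    (hsup : ∀ᵐ x ∂(volume : Measure (EuclideanSpace ℝ (Fin N))),
      ρ' x ≤ wh x - Lnu ν (fun y => φ (wh y)) x) :
    ∫ x, max (w x - wh x) 0 ≤ ∫ x, max (ρ x - ρ' x) 0 :=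
  stmt5_general ν φ hmono L hLip hφ0 w wh ρ ρ' hw hwh hρ hρ' hsub hsup
end
end
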